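/- arXiv:2209.14005 — 7 statements merged into one kernel-verified Lean document; each statement's English description precedes it below -/
import Mathlib

section
/- Let X be a stably locally compact space, i.e. X is sober, locally compact, and the intersection of any two compact saturated subsets of X is compact. Then V_wk X is locally convex-compact: every continuous valuation ν on X and every weak-open neighborhood 𝒰 of ν admit a convex compact saturated subset K of V_wk X with ν in the interior of K and K ⊆ 𝒰. -/
open Set Topology

noncomputable section

/-- The topology on `ℝ≥0` induced by the Scott topology on `ℝ≥0∞`:
its nonempty proper open sets are the intervals `(r, ∞)`. -/
def scottNNReal : TopologicalSpace NNReal :=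
  TopologicalSpace.generateFrom {s : Set NNReal | ∃ r : NNReal, s = Set.Ioi r}

/-- Lower semicontinuity of a map into `ℝ≥0∞`, i.e. continuity into `ℝ≥0∞`
with the Scott topology of its usual order. -/
def IsLSC {X : Type*} [TopologicalSpace X] (f : X → ENNReal) : Prop :=
  ∀ r : ENNReal, IsOpen {x : X | r < f x}

/-- A topological cone: addition and scalar multiplication are jointly continuous,
where `ℝ≥0` carries the (subspace) Scott topology. -/
def IsTopologicalCone (C : Type*) [TopologicalSpace C] [Add C] [SMul NNReal C] : Prop :=
  Continuous (fun p : C × C => p.1 + p.2) ∧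
    Continuous[@instTopologicalSpaceProd NNReal C scottNNReal _, _]
      (fun p : NNReal × C => p.1 • p.2)

/-- A linear lower semicontinuous map `C → ℝ≥0∞`; the elements of the dual cone `C*`. -/
def IsLinearLSC {C : Type*} [TopologicalSpace C] [Add C] [SMul NNReal C]
    (Λ : C → ENNReal) : Prop :=
  (∀ x y : C, Λ (x + y) = Λ x + Λ y) ∧
    (∀ (a : NNReal) (x : C), Λ (a • x) = (a : ENNReal) * Λ x) ∧ IsLSC Λ

/-- The specialization preorder: `x ≤ y` iff every open set containing `x` contains `y`. -/
def SpecLE {X : Type*} [TopologicalSpace X] (x y : X) : Prop :=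
  ∀ U : Set X, IsOpen U → x ∈ U → y ∈ U

/-- A set is saturated iff it is upward closed for the specialization preorder. -/
def IsSaturated {X : Type*} [TopologicalSpace X] (A : Set X) : Prop :=
  ∀ x ∈ A, ∀ y : X, SpecLE x y → y ∈ A

/-- Upward closure with respect to the specialization preorder. -/
def upClosure {X : Type*} [TopologicalSpace X] (A : Set X) : Set X :=
  {y : X | ∃ x ∈ A, SpecLE x y}

/-- Convexity of a subset of a cone. -/
def IsConeConvex {C : Type*} [Add C] [SMul NNReal C] (A : Set C) : Prop :=
  ∀ x ∈ A, ∀ y ∈ A, ∀ a : NNReal, a ≤ 1 → a • x + (1 - a) • y ∈ A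

/-- A cone with a topology is locally convex if every point has a neighborhood base
of convex open sets. -/
def IsLocallyConvexCone (C : Type*) [TopologicalSpace C] [Add C] [SMul NNReal C] : Prop :=
  ∀ x : C, ∀ U : Set C, IsOpen U → x ∈ U →
    ∃ V : Set C, IsOpen V ∧ IsConeConvex V ∧ x ∈ V ∧ V ⊆ U

/-- A cone with a topology is locally convex-compact if every point has a neighborhood base
of convex compact sets. -/
def IsLocallyConvexCompactCone (C : Type*) [TopologicalSpace C] [Add C] [SMul NNReal C] : Prop :=
  ∀ x : C, ∀ U : Set C, IsOpen U → x ∈ U →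
    ∃ K : Set C, IsCompact K ∧ IsConeConvex K ∧ x ∈ interior K ∧ K ⊆ U

/-- A continuous valuation on a topological space `X`. -/
structure ContinuousValuation (X : Type*) [TopologicalSpace X] where
  toFun : Set X → ENNReal
  empty' : toFun ∅ = 0
  modular' : ∀ U V : Set X, IsOpen U → IsOpen V →
    toFun (U ∪ V) + toFun (U ∩ V) = toFun U + toFun V
  mono' : ∀ U V : Set X, IsOpen U → IsOpen V → U ⊆ V → toFun U ≤ toFun V
  scott' : ∀ D : Set (Set X), (∀ U ∈ D, IsOpen U) → DirectedOn (· ⊆ ·) D →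
    toFun (⋃₀ D) = ⨆ U ∈ D, toFun U

/-- The integral `∫ h dν = ∫₀^∞ ν({x : h(x) > t}) dt` of a map `h : X → ℝ≥0∞`
against a continuous valuation `ν`. -/
def valIntegral {X : Type*} [TopologicalSpace X] (ν : ContinuousValuation X)
    (h : X → ENNReal) : ENNReal :=
  ∫⁻ t in Set.Ioi (0 : ℝ), ν.toFun {x : X | ENNReal.ofReal t < h x}

/-- A barycenter of a continuous valuation `ν` on a cone `C`: a point `x₀` with
`Λ(x₀) = ∫ Λ dν` for every `Λ ∈ C*`. -/
def IsBarycenter {C : Type*} [TopologicalSpace C] [Add C] [SMul NNReal C]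
    (ν : ContinuousValuation C) (x₀ : C) : Prop :=
  ∀ Λ : C → ENNReal, IsLinearLSC Λ → Λ x₀ = valIntegral ν Λ

/-- The weak topology on the set of continuous valuations, generated by the subbasic
open sets `[U > r] = {ν : ν(U) > r}` for `U` open and `r : ℝ≥0`. -/
def weakTopology (X : Type*) [TopologicalSpace X] :
    TopologicalSpace (ContinuousValuation X) :=
  TopologicalSpace.generateFrom
    {S : Set (ContinuousValuation X) | ∃ (U : Set X) (r : NNReal),
      IsOpen U ∧ S = {ν : ContinuousValuation X | (r : ENNReal) < ν.toFun U}}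

/-- Pointwise addition of continuous valuations. -/
instance instAddContinuousValuation {X : Type*} [TopologicalSpace X] :
    Add (ContinuousValuation X) :=
  ⟨fun μ ν =>
    { toFun := fun U => μ.toFun U + ν.toFun U
      empty' := by simp [μ.empty', ν.empty']
      modular' := by
        intro U V hU hV
        rw [add_add_add_comm, μ.modular' U V hU hV, ν.modular' U V hU hV, add_add_add_comm]
      mono' := fun U V hU hV hUV =>
        add_le_add (μ.mono' U V hU hV hUV) (ν.mono' U V hU hV hUV)
      scott' := by
        intro D hD hdir
        try simp only []
        rw [μ.scott' D hD hdir, ν.scott' D hD hdir, iSup_subtype', iSup_subtype',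
          iSup_subtype']
        exact ENNReal.iSup_add_iSup fun i j => by
          obtain ⟨k, hk, hik, hjk⟩ := hdir i.1 i.2 j.1 j.2
          exact ⟨⟨k, hk⟩, add_le_add (μ.mono' _ _ (hD _ i.2) (hD _ hk) hik)
            (ν.mono' _ _ (hD _ j.2) (hD _ hk) hjk)⟩ }⟩

/-- Pointwise scalar multiplication of continuous valuations. -/
instance instSMulContinuousValuation {X : Type*} [TopologicalSpace X] :
    SMul NNReal (ContinuousValuation X) :=
  ⟨fun a μ =>
    { toFun := fun U => (a : ENNReal) * μ.toFun U
      empty' := by simp [μ.empty']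
      modular' := by
        intro U V hU hV
        rw [← mul_add, μ.modular' U V hU hV, mul_add]
      mono' := fun U V hU hV hUV => mul_le_mul_of_nonneg_left (μ.mono' U V hU hV hUV) (zero_le)
      scott' := by
        intro D hD hdir
        try simp only []
        rw [μ.scott' D hD hdir]
        simp_rw [ENNReal.mul_iSup] }⟩

/-! Write `V ⋐ W` when `V` is open and `V ⊆ Q ⊆ W` for a compact saturated `Q`. Each subbasic
neighbourhood `[U > r]` of `ν` is approximated from inside by some `[V > q]` with `V ⋐ U`, and
the valuations giving mass at least `q` to every open superset of `Q` form a convex, saturated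
neighbourhood of `ν` inside `[U > r]`. It is compact: an ultrafilter on it converges pointwise on
opens to a strict, monotone, modular set function `ℓ`, and the inner regularization
`W ↦ ⨆ {ℓ V | V ⋐ W}` is a continuous valuation to which the ultrafilter converges. Modularity
of the regularization needs `⋐` to be stable under binary intersections, which is where the
compactness of intersections of compact saturated sets enters. -/

open Filter

section Saturation

variable {X : Type*} [TopologicalSpace X]

lemma subset_upClosure (A : Set X) : A ⊆ upClosure A :=
  fun x hx => ⟨x, hx, fun _ _ h => h⟩

lemma upClosure_subset {A W : Set X} (hW : IsOpen W) (h : A ⊆ W) : upClosure A ⊆ W := by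
  rintro y ⟨x, hx, hxy⟩
  exact hxy W hW (h hx)

lemma isSaturated_upClosure (A : Set X) : IsSaturated (upClosure A) := by
  rintro x ⟨z, hz, hzx⟩ y hxy
  exact ⟨z, hz, fun U hU h => hxy U hU (hzx U hU h)⟩

lemma IsCompact.upClosure {Q : Set X} (hQ : IsCompact Q) : IsCompact (upClosure Q) := by
  refine isCompact_of_finite_subcover fun U hU hsub => ?_
  obtain ⟨t, ht⟩ := hQ.elim_finite_subcover U hU ((subset_upClosure Q).trans hsub)
  exact ⟨t, upClosure_subset (isOpen_biUnion fun i _ => hU i) ht⟩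

lemma IsSaturated.iInter {ι : Sort*} {A : ι → Set X} (h : ∀ i, IsSaturated (A i)) :
    IsSaturated (⋂ i, A i) := fun x hx y hxy =>
  mem_iInter.2 fun i => h i x (mem_iInter.1 hx i) y hxy

def IsCoherentSpace (X : Type*) [TopologicalSpace X] : Prop :=
  ∀ K₁ K₂ : Set X, IsCompact K₁ → IsSaturated K₁ → IsCompact K₂ → IsSaturated K₂ →
    IsCompact (K₁ ∩ K₂)

end Saturation

section

variable {X : Type*} [TopologicalSpace X]

def CompactlyBelow (V W : Set X) : Prop :=
  IsOpen V ∧ ∃ Q : Set X, IsCompact Q ∧ IsSaturated Q ∧ V ⊆ Q ∧ Q ⊆ W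

namespace CompactlyBelow

variable {A B U V W W' : Set X}

lemma isOpen (h : CompactlyBelow V W) : IsOpen V := h.1

lemma subset (h : CompactlyBelow V W) : V ⊆ W := by
  obtain ⟨-, Q, -, -, hVQ, hQW⟩ := h
  exact hVQ.trans hQW

lemma empty (W : Set X) : CompactlyBelow ∅ W :=
  ⟨isOpen_empty, ∅, isCompact_empty, fun _ hx => hx.elim, subset_rfl, empty_subset W⟩

instance (W : Set X) : Nonempty {V // CompactlyBelow V W} := ⟨⟨∅, empty W⟩⟩

lemma mono_right (h : CompactlyBelow V W) (hW : W ⊆ W') : CompactlyBelow V W' := by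
  obtain ⟨hV, Q, hQc, hQs, hVQ, hQW⟩ := h
  exact ⟨hV, Q, hQc, hQs, hVQ, hQW.trans hW⟩

lemma union (hA : CompactlyBelow A U) (hB : CompactlyBelow B V) :
    CompactlyBelow (A ∪ B) (U ∪ V) := by
  obtain ⟨hAo, QA, hAc, hAs, hAQ, hQU⟩ := hA
  obtain ⟨hBo, QB, hBc, hBs, hBQ, hQV⟩ := hB
  exact ⟨hAo.union hBo, QA ∪ QB, hAc.union hBc,
    fun x hx y hxy => hx.imp (fun hx => hAs x hx y hxy) (fun hx => hBs x hx y hxy),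
    union_subset_union hAQ hBQ, union_subset_union hQU hQV⟩

lemma union_left (hA : CompactlyBelow A W) (hB : CompactlyBelow B W) :
    CompactlyBelow (A ∪ B) W :=
  (hA.union hB).mono_right (union_self W).subset

lemma inter (hX : IsCoherentSpace X) (hA : CompactlyBelow A U) (hB : CompactlyBelow B V) :
    CompactlyBelow (A ∩ B) (U ∩ V) := by
  obtain ⟨hAo, QA, hAc, hAs, hAQ, hQU⟩ := hA
  obtain ⟨hBo, QB, hBc, hBs, hBQ, hQV⟩ := hB
  exact ⟨hAo.inter hBo, QA ∩ QB, hX _ _ hAc hAs hBc hBs,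
    fun x hx y hxy => ⟨hAs x hx.1 y hxy, hBs x hx.2 y hxy⟩,
    inter_subset_inter hAQ hBQ, inter_subset_inter hQU hQV⟩

lemma exists_mem_of_directedOn {D : Set (Set X)} (hD : ∀ U ∈ D, IsOpen U)
    (hdir : DirectedOn (· ⊆ ·) D) (hne : D.Nonempty) (h : CompactlyBelow V (⋃₀ D)) :
    ∃ U ∈ D, CompactlyBelow V U := by
  obtain ⟨hV, Q, hQc, hQs, hVQ, hQD⟩ := h
  have : Nonempty D := hne.to_subtype
  obtain ⟨U, hQU⟩ := hQc.elim_directed_cover (fun U : D => (U : Set X)) (fun U => hD U U.2)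
    (by rwa [← sUnion_eq_iUnion]) hdir.directed_val
  exact ⟨U, U.2, hV, Q, hQc, hQs, hVQ, hQU⟩

lemma directedOn_setOf (W : Set X) : DirectedOn (· ⊆ ·) {V | CompactlyBelow V W} :=
  fun A hA B hB => ⟨A ∪ B, hA.union_left hB, subset_union_left, subset_union_right⟩

variable [LocallyCompactSpace X]

lemma exists_superset {Q : Set X} (hQ : IsCompact Q) (hW : IsOpen W) (hQW : Q ⊆ W) :
    ∃ V, CompactlyBelow V W ∧ Q ⊆ V := by
  obtain ⟨L, hL, hQL, hLW⟩ := exists_compact_between hQ hW hQW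
  exact ⟨interior L, ⟨isOpen_interior, upClosure L, hL.upClosure, isSaturated_upClosure L,
    interior_subset.trans (subset_upClosure L), upClosure_subset hW hLW⟩, hQL⟩

lemma sUnion_setOf (hW : IsOpen W) : ⋃₀ {V | CompactlyBelow V W} = W := by
  refine subset_antisymm (sUnion_subset fun V hV => hV.subset) fun x hx => ?_
  obtain ⟨V, hV, hxV⟩ := exists_superset isCompact_singleton hW (singleton_subset_iff.2 hx)
  exact ⟨V, hV, hxV rfl⟩

/-- The compact set between `W` and `U ∪ V` is covered by a single member of the directed
family of sets `A ∪ B` with `A ⋐ U` and `B ⋐ V`. -/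
lemma exists_subset_union (hU : IsOpen U) (hV : IsOpen V) (h : CompactlyBelow W (U ∪ V)) :
    ∃ A B, CompactlyBelow A U ∧ CompactlyBelow B V ∧ W ⊆ A ∪ B := by
  obtain ⟨-, Q, hQc, -, hWQ, hQUV⟩ := h
  let ι := {A // CompactlyBelow A U} × {B // CompactlyBelow B V}
  have hcover : Q ⊆ ⋃ p : ι, (p.1 : Set X) ∪ p.2 := by
    rw [← (sUnion_setOf hU), ← (sUnion_setOf hV)] at hQUV
    intro x hx
    rcases hQUV hx with ⟨A, hA, hxA⟩ | ⟨B, hB, hxB⟩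
    · exact mem_iUnion.2 ⟨(⟨A, hA⟩, ⟨∅, empty V⟩), Or.inl hxA⟩
    · exact mem_iUnion.2 ⟨(⟨∅, empty U⟩, ⟨B, hB⟩), Or.inr hxB⟩
  have hdir : Directed (· ⊆ ·) fun p : ι => (p.1 : Set X) ∪ p.2 := fun p p' =>
    ⟨(⟨_, p.1.2.union_left p'.1.2⟩, ⟨_, p.2.2.union_left p'.2.2⟩),
      union_subset_union subset_union_left subset_union_left,
      union_subset_union subset_union_right subset_union_right⟩
  obtain ⟨⟨⟨A, hA⟩, ⟨B, hB⟩⟩, hQAB⟩ := hQc.elim_directed_cover _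
    (fun p => p.1.2.isOpen.union p.2.2.isOpen) hcover hdir
  exact ⟨A, B, hA, hB, hWQ.trans hQAB⟩

end CompactlyBelow

end

section Regularization

variable {X : Type*} [TopologicalSpace X]

structure IsValuation (ℓ : Set X → ENNReal) : Prop where
  empty : ℓ ∅ = 0
  mono : ∀ ⦃U V : Set X⦄, IsOpen U → IsOpen V → U ⊆ V → ℓ U ≤ ℓ V
  modular : ∀ ⦃U V : Set X⦄, IsOpen U → IsOpen V → ℓ (U ∪ V) + ℓ (U ∩ V) = ℓ U + ℓ V

lemma IsValuation.of_tendsto {l : Filter (ContinuousValuation X)} [l.NeBot]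
    {ℓ : Set X → ENNReal} (hℓ : ∀ W, Tendsto (fun μ : ContinuousValuation X => μ.toFun W) l
      (𝓝 (ℓ W))) : IsValuation ℓ where
  empty := tendsto_nhds_unique (hℓ ∅) (by simp only [ContinuousValuation.empty',
    tendsto_const_nhds])
  mono _ _ hU hV hUV := le_of_tendsto_of_tendsto' (hℓ _) (hℓ _) fun μ => μ.mono' _ _ hU hV hUV
  modular U V hU hV := tendsto_nhds_unique ((hℓ (U ∪ V)).add (hℓ (U ∩ V)))
    (((hℓ U).add (hℓ V)).congr fun μ => (μ.modular' U V hU hV).symm)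

def innerReg (ℓ : Set X → ENNReal) (W : Set X) : ENNReal :=
  ⨆ V : {V // CompactlyBelow V W}, ℓ V

variable {ℓ : Set X → ENNReal} {U V W : Set X}

lemma le_innerReg (h : CompactlyBelow V W) : ℓ V ≤ innerReg ℓ W :=
  le_iSup (fun V : {V // CompactlyBelow V W} => ℓ V) ⟨V, h⟩

lemma innerReg_mono (h : V ⊆ W) : innerReg ℓ V ≤ innerReg ℓ W :=
  iSup_le fun A => le_innerReg (A.2.mono_right h)

lemma IsValuation.innerReg_empty (hℓ : IsValuation ℓ) : innerReg ℓ ∅ = 0 :=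
  nonpos_iff_eq_zero.1 <| iSup_le fun A => by
    rw [subset_empty_iff.1 A.2.subset, hℓ.empty]

lemma innerReg_sUnion {D : Set (Set X)} (hD : ∀ U ∈ D, IsOpen U) (hdir : DirectedOn (· ⊆ ·) D)
    (hne : D.Nonempty) : innerReg ℓ (⋃₀ D) = ⨆ U ∈ D, innerReg ℓ U := by
  refine le_antisymm (iSup_le fun A => ?_) (iSup₂_le fun U hU => innerReg_mono
    (subset_sUnion_of_mem hU))
  obtain ⟨U, hU, hAU⟩ := A.2.exists_mem_of_directedOn hD hdir hne
  exact (le_innerReg hAU).trans (le_iSup₂_of_le U hU le_rfl)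

lemma ContinuousValuation.innerReg_toFun [LocallyCompactSpace X] (ν : ContinuousValuation X)
    (hW : IsOpen W) : innerReg ν.toFun W = ν.toFun W := by
  conv_rhs => rw [← CompactlyBelow.sUnion_setOf hW]
  rw [ν.scott' _ (fun V hV => hV.isOpen) (CompactlyBelow.directedOn_setOf W), innerReg,
    iSup_subtype']
  rfl

lemma IsValuation.innerReg_union_add_inter_le [LocallyCompactSpace X] (hℓ : IsValuation ℓ)
    (hU : IsOpen U) (hV : IsOpen V) :
    innerReg ℓ (U ∪ V) + innerReg ℓ (U ∩ V) ≤ innerReg ℓ U + innerReg ℓ V := by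
  refine ENNReal.iSup_add_iSup_le fun C B => ?_
  obtain ⟨A₁, A₂, hA₁, hA₂, hC⟩ := C.2.exists_subset_union hU hV
  have h₁ : CompactlyBelow (A₁ ∪ B) U := hA₁.union_left (B.2.mono_right inter_subset_left)
  have h₂ : CompactlyBelow (A₂ ∪ B) V := hA₂.union_left (B.2.mono_right inter_subset_right)
  calc ℓ C + ℓ B ≤ ℓ ((A₁ ∪ B) ∪ (A₂ ∪ B)) + ℓ ((A₁ ∪ B) ∩ (A₂ ∪ B)) := by
        gcongr
        · exact hℓ.mono C.2.isOpen (h₁.isOpen.union h₂.isOpen)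
            (hC.trans (union_subset_union subset_union_left subset_union_left))
        · exact hℓ.mono B.2.isOpen (h₁.isOpen.inter h₂.isOpen)
            (subset_inter subset_union_right subset_union_right)
    _ = ℓ (A₁ ∪ B) + ℓ (A₂ ∪ B) := hℓ.modular h₁.isOpen h₂.isOpen
    _ ≤ innerReg ℓ U + innerReg ℓ V := add_le_add (le_innerReg h₁) (le_innerReg h₂)

lemma IsValuation.innerReg_add_le_union_add_inter (hX : IsCoherentSpace X) (hℓ : IsValuation ℓ) :
    innerReg ℓ U + innerReg ℓ V ≤ innerReg ℓ (U ∪ V) + innerReg ℓ (U ∩ V) := by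
  refine ENNReal.iSup_add_iSup_le fun A B => ?_
  rw [← hℓ.modular A.2.isOpen B.2.isOpen]
  exact add_le_add (le_innerReg (A.2.union B.2)) (le_innerReg (A.2.inter hX B.2))

def IsValuation.regularize [LocallyCompactSpace X] (hX : IsCoherentSpace X)
    (hℓ : IsValuation ℓ) : ContinuousValuation X where
  toFun := innerReg ℓ
  empty' := hℓ.innerReg_empty
  modular' _ _ hU hV := le_antisymm (hℓ.innerReg_union_add_inter_le hU hV)
    (hℓ.innerReg_add_le_union_add_inter hX)
  mono' _ _ _ _ := innerReg_mono
  scott' D hD hdir := by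
    rcases D.eq_empty_or_nonempty with rfl | hne
    · simp only [sUnion_empty, hℓ.innerReg_empty, mem_empty_iff_false, iSup_false, bot_eq_zero,
        ENNReal.iSup_zero]
    · exact innerReg_sUnion hD hdir hne

lemma IsValuation.tendsto_regularize [LocallyCompactSpace X] (hX : IsCoherentSpace X)
    {ℓ : Set X → ENNReal} (hℓ : IsValuation ℓ) {l : Filter (ContinuousValuation X)}
    (hlim : ∀ W, Tendsto (fun μ : ContinuousValuation X => μ.toFun W) l (𝓝 (ℓ W))) :
    Tendsto id l (@nhds _ (weakTopology X) (hℓ.regularize hX)) := by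
  refine TopologicalSpace.tendsto_nhds_generateFrom_iff.2 ?_
  rintro _ ⟨W, r, hW, rfl⟩ (hr : (r : ENNReal) < innerReg ℓ W)
  obtain ⟨V, hrV⟩ := lt_iSup_iff.1 hr
  filter_upwards [(hlim V).eventually (lt_mem_nhds hrV)] with μ hμ
  exact hμ.trans_le (μ.mono' _ _ V.2.isOpen hW V.2.subset)

end Regularization

lemma IsConeConvex.iInter {C : Type*} [Add C] [SMul NNReal C] {ι : Sort*} {A : ι → Set C}
    (h : ∀ i, IsConeConvex (A i)) : IsConeConvex (⋂ i, A i) := fun x hx y hy a ha =>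
  mem_iInter.2 fun i => h i x (mem_iInter.1 hx i) y (mem_iInter.1 hy i) a ha

namespace ContinuousValuation

variable {X : Type*} [TopologicalSpace X]

lemma isOpen_setOf_lt_toFun {U : Set X} (hU : IsOpen U) (r : NNReal) :
    IsOpen[weakTopology X] {μ : ContinuousValuation X | (r : ENNReal) < μ.toFun U} :=
  TopologicalSpace.isOpen_generateFrom_of_mem ⟨U, r, hU, rfl⟩

lemma toFun_le_of_specLE {μ μ' : ContinuousValuation X} (h : @SpecLE _ (weakTopology X) μ μ')
    {U : Set X} (hU : IsOpen U) : μ.toFun U ≤ μ'.toFun U :=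
  ENNReal.le_of_forall_nnreal_lt fun r hr => (h _ (isOpen_setOf_lt_toFun hU r) hr).le

lemma exists_finset_of_isOpen {𝒰 : Set (ContinuousValuation X)} (h𝒰 : IsOpen[weakTopology X] 𝒰)
    {ν : ContinuousValuation X} (hν : ν ∈ 𝒰) :
    ∃ s : Finset (Set X × NNReal), (∀ p ∈ s, IsOpen p.1 ∧ (p.2 : ENNReal) < ν.toFun p.1) ∧
      {μ : ContinuousValuation X | ∀ p ∈ s, (p.2 : ENNReal) < μ.toFun p.1} ⊆ 𝒰 := by
  classical
  induction h𝒰 with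
  | basic S hS =>
    obtain ⟨U, r, hU, rfl⟩ := hS
    exact ⟨{(U, r)}, by simpa using ⟨hU, hν⟩, fun μ hμ => by simpa using hμ⟩
  | univ => exact ⟨∅, by simp, subset_univ _⟩
  | inter S T _ _ hS hT =>
    obtain ⟨s, hs, hsS⟩ := hS hν.1
    obtain ⟨t, ht, htT⟩ := hT hν.2
    refine ⟨s ∪ t, fun p hp => (Finset.mem_union.1 hp).elim (hs p) (ht p), fun μ hμ => ⟨?_, ?_⟩⟩
    · exact hsS fun p hp => hμ p (Finset.mem_union_left t hp)
    · exact htT fun p hp => hμ p (Finset.mem_union_right s hp)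
  | sUnion 𝒮 _ h𝒮 =>
    obtain ⟨S, hS, hνS⟩ := hν
    obtain ⟨s, hs, hsS⟩ := h𝒮 S hS hνS
    exact ⟨s, hs, hsS.trans (subset_sUnion_of_mem hS)⟩

def massAtLeast (Q : Set X) (q : NNReal) : Set (ContinuousValuation X) :=
  {μ | ∀ W, IsOpen W → Q ⊆ W → (q : ENNReal) ≤ μ.toFun W}

variable {Q U V : Set X} {q r : NNReal}

lemma isConeConvex_massAtLeast : IsConeConvex (massAtLeast Q q) := by
  intro μ hμ μ' hμ' a ha W hW hQW
  calc (q : ENNReal) = a * q + (1 - a : NNReal) * q := by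
        rw [← add_mul, ← ENNReal.coe_add, add_tsub_cancel_of_le ha, ENNReal.coe_one, one_mul]
    _ ≤ a * μ.toFun W + (1 - a : NNReal) * μ'.toFun W := by
        gcongr
        exacts [hμ W hW hQW, hμ' W hW hQW]

lemma isSaturated_massAtLeast : @IsSaturated _ (weakTopology X) (massAtLeast Q q) :=
  fun _ hμ _ hμμ' W hW hQW => (hμ W hW hQW).trans (toFun_le_of_specLE hμμ' hW)

lemma massAtLeast_subset_setOf_lt (hU : IsOpen U) (hQU : Q ⊆ U) (hrq : r < q) :
    massAtLeast Q q ⊆ {μ | (r : ENNReal) < μ.toFun U} :=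
  fun _ hμ => (ENNReal.coe_lt_coe.2 hrq).trans_le (hμ U hU hQU)

lemma setOf_lt_subset_massAtLeast (hV : IsOpen V) (hVQ : V ⊆ Q) :
    {μ | (q : ENNReal) < μ.toFun V} ⊆ massAtLeast Q q :=
  fun μ hμ W hW hQW => hμ.le.trans (μ.mono' V W hV hW (hVQ.trans hQW))

lemma isCompact_iInter_massAtLeast [LocallyCompactSpace X] (hX : IsCoherentSpace X)
    {ι : Sort*} {Q : ι → Set X} (q : ι → NNReal) (hQ : ∀ i, IsCompact (Q i)) :
    @IsCompact _ (weakTopology X) (⋂ i, massAtLeast (Q i) (q i)) := by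
  let := weakTopology X
  refine isCompact_iff_ultrafilter_le_nhds.2 fun 𝔉 h𝔉 => ?_
  let ℓ W := (𝔉.map fun μ : ContinuousValuation X => μ.toFun W).lim
  have hℓ : ∀ W, Tendsto (fun μ : ContinuousValuation X => μ.toFun W) 𝔉 (𝓝 (ℓ W)) :=
    fun W => (𝔉.map _).le_nhds_lim
  have hℓv : IsValuation ℓ := IsValuation.of_tendsto hℓ
  refine ⟨hℓv.regularize hX, mem_iInter.2 fun i W hW hQW => ?_, hℓv.tendsto_regularize hX hℓ⟩
  obtain ⟨V, hVW, hQV⟩ := CompactlyBelow.exists_superset (hQ i) hW hQW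
  refine le_trans ?_ (le_innerReg hVW)
  refine ge_of_tendsto (hℓ V) (mem_of_superset (le_principal_iff.1 h𝔉) fun μ hμ => ?_)
  exact mem_iInter.1 hμ i V hVW.isOpen hQV

lemma exists_massAtLeast_mem_nhds [LocallyCompactSpace X] (ν : ContinuousValuation X)
    (hU : IsOpen U) (hr : (r : ENNReal) < ν.toFun U) :
    ∃ Q q, IsCompact Q ∧ Q ⊆ U ∧ r < q ∧ massAtLeast Q q ∈ @nhds _ (weakTopology X) ν := by
  rw [← ν.innerReg_toFun hU] at hr
  obtain ⟨V, hrV⟩ := lt_iSup_iff.1 hr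
  obtain ⟨hV, Q, hQc, -, hVQ, hQU⟩ := V.2
  obtain ⟨q, hrq, hqV⟩ := ENNReal.lt_iff_exists_nnreal_btwn.1 hrV
  have hnhds := @IsOpen.mem_nhds _ (weakTopology X) _ _ (isOpen_setOf_lt_toFun hV q) hqV
  exact ⟨Q, q, hQc, hQU, ENNReal.coe_lt_coe.1 hrq,
    mem_of_superset hnhds (setOf_lt_subset_massAtLeast hV hVQ)⟩

end ContinuousValuation

open ContinuousValuation

theorem weakTopology_locally_convex_compact_general {X : Type*} [TopologicalSpace X]
    [LocallyCompactSpace X]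
    (hstab : ∀ K₁ K₂ : Set X, IsCompact K₁ → IsSaturated K₁ →
      IsCompact K₂ → IsSaturated K₂ → IsCompact (K₁ ∩ K₂)) :
    ∀ ν : ContinuousValuation X, ∀ 𝒰 : Set (ContinuousValuation X),
      IsOpen[weakTopology X] 𝒰 → ν ∈ 𝒰 →
      ∃ K : Set (ContinuousValuation X), IsConeConvex K ∧
        @IsCompact _ (weakTopology X) K ∧ @IsSaturated _ (weakTopology X) K ∧
        ν ∈ @interior _ (weakTopology X) K ∧ K ⊆ 𝒰 := by
  intro ν 𝒰 h𝒰 hν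
  let := weakTopology X
  obtain ⟨s, hs, hs𝒰⟩ := exists_finset_of_isOpen h𝒰 hν
  choose Q q hQc hQU hrq hnhds using fun p : s =>
    exists_massAtLeast_mem_nhds ν (hs p p.2).1 (hs p p.2).2
  refine ⟨⋂ p, massAtLeast (Q p) (q p), IsConeConvex.iInter fun _ => isConeConvex_massAtLeast,
    isCompact_iInter_massAtLeast hstab q hQc, IsSaturated.iInter fun _ => isSaturated_massAtLeast,
    mem_interior_iff_mem_nhds.2 (iInter_mem.2 hnhds), fun μ hμ => hs𝒰 fun p hp => ?_⟩
  exact massAtLeast_subset_setOf_lt (hs p hp).1 (hQU ⟨p, hp⟩) (hrq ⟨p, hp⟩)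
    (mem_iInter.1 hμ ⟨p, hp⟩)

/-- For a stably locally compact space `X`, the space `V_wk X` of continuous
valuations with the weak topology is locally convex-compact. -/
theorem weakTopology_locally_convex_compact {X : Type*} [TopologicalSpace X]
    [T0Space X] [QuasiSober X] [LocallyCompactSpace X]
    (hstab : ∀ K₁ K₂ : Set X, IsCompact K₁ → IsSaturated K₁ →
      IsCompact K₂ → IsSaturated K₂ → IsCompact (K₁ ∩ K₂)) :
    ∀ ν : ContinuousValuation X, ∀ 𝒰 : Set (ContinuousValuation X),
      IsOpen[weakTopology X] 𝒰 → ν ∈ 𝒰 →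
      ∃ K : Set (ContinuousValuation X), IsConeConvex K ∧
        @IsCompact _ (weakTopology X) K ∧ @IsSaturated _ (weakTopology X) K ∧
        ν ∈ @interior _ (weakTopology X) K ∧ K ⊆ 𝒰 :=
  weakTopology_locally_convex_compact_general hstab
end
end

section
/- Let C and D be cones, each carried by a topological space, let r : C → D be continuous and linear (r(x+y) = r(x)+r(y) and r(a·x) = a·r(x)), and let s : D → C be continuous with r ∘ s = id_D. If C is locally convex-compact, then D is locally convex-compact; and if addition and scalar multiplication on C are jointly continuous (C is a topological cone), then addition and scalar multiplication on D are jointly continuous as well. -/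
open Set Topology

noncomputable section

/-- Local convex-compactness and joint continuity of the cone operations
are preserved by linear retracts. -/
theorem linear_retract_preserves {C D : Type*}
    [TopologicalSpace C] [AddCommMonoid C] [Module NNReal C]
    [TopologicalSpace D] [AddCommMonoid D] [Module NNReal D]
    (r : C → D) (hr_cont : Continuous r)
    (hr_add : ∀ x y : C, r (x + y) = r x + r y)
    (hr_smul : ∀ (a : NNReal) (x : C), r (a • x) = a • r x)
    (s : D → C) (hs_cont : Continuous s)
    (hrs : ∀ y : D, r (s y) = y) :
    (IsLocallyConvexCompactCone C → IsLocallyConvexCompactCone D) ∧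
    (IsTopologicalCone C → IsTopologicalCone D) := by
  constructor
  · intro hC y U hU hyU
    obtain ⟨K, hKc, hKconv, hint, hKU⟩ :=
      hC (s y) (r ⁻¹' U) (hU.preimage hr_cont) (by simpa [hrs] using hyU)
    refine ⟨r '' K, hKc.image hr_cont, ?_, ?_, ?_⟩
    · rintro _ ⟨x, hx, rfl⟩ _ ⟨z, hz, rfl⟩ a ha
      exact ⟨a • x + (1 - a) • z, hKconv x hx z hz a ha, by rw [hr_add, hr_smul, hr_smul]⟩
    · have hopen : IsOpen (s ⁻¹' interior K) := isOpen_interior.preimage hs_cont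
      have hsub : s ⁻¹' interior K ⊆ r '' K := fun z hz =>
        ⟨s z, interior_subset hz, hrs z⟩
      exact interior_maximal hsub hopen (by simpa using hint)
    · rintro _ ⟨x, hx, rfl⟩; exact hKU hx
  · rintro ⟨hadd, hsmul⟩
    constructor
    · have : (fun p : D × D => p.1 + p.2) =
          fun p : D × D => r (s p.1 + s p.2) := by
        funext p; rw [hr_add, hrs, hrs]
      rw [this]
      exact hr_cont.comp (hadd.comp ((hs_cont.comp continuous_fst).prodMk
        (hs_cont.comp continuous_snd)))
    · letI : TopologicalSpace NNReal := scottNNReal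
      have : (fun p : NNReal × D => p.1 • p.2) =
          fun p : NNReal × D => r (p.1 • s p.2) := by
        funext p; rw [hr_smul, hrs]
      rw [this]
      exact hr_cont.comp (hsmul.comp (continuous_fst.prodMk
        (hs_cont.comp continuous_snd)))
end
end

section
/- Let C be a topological cone. Then the dual cone C*, i.e. the set of lower semicontinuous linear maps from C to ℝ≥0∞ equipped with the weak*upper topology, is a sober topological space. -/
open Set Topology

noncomputable section

lemma isLSC_iff_lowerSemicontinuous {X : Type*} [TopologicalSpace X] {f : X → ENNReal} :
    IsLSC f ↔ LowerSemicontinuous f := by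
  rw [lowerSemicontinuous_iff_isOpen_preimage]
  exact Iff.rfl

/-- The dual cone `C*` of lower semicontinuous linear maps `C → ℝ≥0∞`. -/
def Cdual (C : Type*) [TopologicalSpace C] [Add C] [SMul NNReal C] : Type _ :=
  {Λ : C → ENNReal // IsLinearLSC Λ}

/-- Pointwise addition on `C*`. -/
instance instAddCdual {C : Type*} [TopologicalSpace C] [Add C] [SMul NNReal C] :
    Add (Cdual C) :=
  ⟨fun Λ₁ Λ₂ => ⟨fun x => Λ₁.1 x + Λ₂.1 x,
    fun x y => by simp only []; rw [Λ₁.2.1 x y, Λ₂.2.1 x y]; ring,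
    fun a x => by simp only []; rw [Λ₁.2.2.1 a x, Λ₂.2.2.1 a x, mul_add],
    isLSC_iff_lowerSemicontinuous.2
      ((isLSC_iff_lowerSemicontinuous.1 Λ₁.2.2.2).add
        (isLSC_iff_lowerSemicontinuous.1 Λ₂.2.2.2))⟩⟩

/-- Pointwise scalar multiplication on `C*`. -/
instance instSMulCdual {C : Type*} [TopologicalSpace C] [Add C] [SMul NNReal C] :
    SMul NNReal (Cdual C) :=
  ⟨fun a Λ => ⟨fun x => (a : ENNReal) * Λ.1 x,
    fun x y => by simp only []; rw [Λ.2.1 x y, mul_add],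
    fun b x => by simp only []; rw [Λ.2.2.1 b x]; ring,
    isLSC_iff_lowerSemicontinuous.2 <| by
      have hc : Continuous fun t : ENNReal => (a : ENNReal) * t :=
        ENNReal.continuous_const_mul (by simp)
      exact hc.comp_lowerSemicontinuous (isLSC_iff_lowerSemicontinuous.1 Λ.2.2.2)
        (fun u v huv => mul_le_mul_right huv _)⟩⟩

/-- The weak*upper topology on `C*`: the coarsest topology making `Λ ↦ Λ(x)` lower
semicontinuous for every `x ∈ C`. -/
def dualTopology (C : Type*) [TopologicalSpace C] [Add C] [SMul NNReal C] :
    TopologicalSpace (Cdual C) :=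
  TopologicalSpace.generateFrom
    {S : Set (Cdual C) | ∃ (x : C) (r : ENNReal), S = {Λ : Cdual C | r < Λ.1 x}}

/-! The specialization order of `C*` is the reverse of the pointwise order, so `C*` is T₀. Given
an irreducible closed set `S`, irreducibility applied to the subbasic opens `{Λ | r < Λ x}` makes `S`
directed up to approximation from below, so the pointwise supremum of `S` is again additive, hence
in `C*`. Every subbasic open containing this supremum meets `S`, so it lies in the closure of `S`,
that is in `S`; as it dominates `S` pointwise, it is the generic point of `S`. -/

section GenerateFrom

variable {α : Type*} [t : TopologicalSpace α] {g : Set (Set α)}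

theorem specializes_iff_of_eq_generateFrom (ht : t = TopologicalSpace.generateFrom g) {x y : α} :
    x ⤳ y ↔ ∀ s ∈ g, y ∈ s → x ∈ s := by
  have hopen : ∀ s ∈ g, IsOpen s := fun s hs => ht ▸ TopologicalSpace.isOpen_generateFrom_of_mem hs
  have hnhds : ∀ a : α, 𝓝 a = ⨅ s ∈ {s | a ∈ s ∧ s ∈ g}, Filter.principal s := by
    subst ht
    exact fun a => TopologicalSpace.nhds_generateFrom
  refine ⟨fun h s hs => h.mem_open (hopen s hs), fun h => ?_⟩
  rw [Specializes, hnhds y]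
  exact le_iInf₂ fun s hs => Filter.le_principal_iff.2 <| (hopen s hs.2).mem_nhds (h s hs.2 hs.1)

/-- Irreducibility lets the hypothesis pass from the subbasis `g` to its finite intersections. -/
theorem IsIrreducible.mem_closure_of_eq_generateFrom (ht : t = TopologicalSpace.generateFrom g)
    {S : Set α} (hS : IsIrreducible S) {a : α} (h : ∀ s ∈ g, a ∈ s → (s ∩ S).Nonempty) :
    a ∈ closure S := by
  refine mem_closure_iff.2 fun U hU haU => ?_
  rw [ht] at hU
  induction hU with
  | basic s hs => exact h s hs haU
  | univ => simpa using hS.nonempty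
  | inter u v hu hv ihu ihv =>
    obtain ⟨b, hbS, hbu, hbv⟩ := hS.2 u v (ht ▸ hu) (ht ▸ hv)
      ((ihu haU.1).imp fun _ hb => ⟨hb.2, hb.1⟩) ((ihv haU.2).imp fun _ hb => ⟨hb.2, hb.1⟩)
    exact ⟨b, ⟨hbu, hbv⟩, hbS⟩
  | sUnion K _ ih =>
    obtain ⟨u, huK, hau⟩ := haU
    obtain ⟨b, hbu, hbS⟩ := ih u huK hau
    exact ⟨b, ⟨u, huK, hbu⟩, hbS⟩

end GenerateFrom

theorem ENNReal.add_le_of_forall_lt {a b c : ENNReal} (ha : a ≤ c) (hb : b ≤ c)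
    (h : ∀ a' < a, ∀ b' < b, a' + b' ≤ c) : a + b ≤ c := by
  rcases eq_or_ne a 0 with rfl | ha0
  · rwa [zero_add]
  rcases eq_or_ne b 0 with rfl | hb0
  · rwa [add_zero]
  refine le_of_forall_lt fun d hd => ?_
  obtain ⟨a', ha', b', hb', hd'⟩ := ENNReal.exists_lt_add_of_lt_add hd ha0 hb0
  exact hd'.trans_le (h a' ha' b' hb')

namespace Cdual

variable {C : Type*} [TopologicalSpace C] [Add C] [SMul NNReal C]

instance : TopologicalSpace (Cdual C) := dualTopology C

theorem isOpen_setOf_lt_apply (x : C) (r : ENNReal) : IsOpen {Λ : Cdual C | r < Λ.1 x} :=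
  TopologicalSpace.isOpen_generateFrom_of_mem ⟨x, r, rfl⟩

theorem specializes_iff_apply_le {Λ Λ' : Cdual C} : Λ ⤳ Λ' ↔ ∀ x, Λ'.1 x ≤ Λ.1 x := by
  rw [specializes_iff_of_eq_generateFrom (t := dualTopology C) rfl]
  constructor
  · exact fun h x => le_of_forall_lt fun r hr => h _ ⟨x, r, rfl⟩ hr
  · rintro h _ ⟨x, r, rfl⟩ hr
    exact hr.trans_le (h x)

instance : T0Space (Cdual C) := by
  refine (t0Space_iff_inseparable _).2 fun Λ Λ' h => ?_
  obtain ⟨h₁, h₂⟩ := inseparable_iff_specializes_and.1 h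
  exact Subtype.ext <| funext fun x =>
    le_antisymm (specializes_iff_apply_le.1 h₂ x) (specializes_iff_apply_le.1 h₁ x)

theorem _root_.IsPreirreducible.exists_lt_apply_and_lt_apply {S : Set (Cdual C)}
    (hS : IsPreirreducible S) {Λ₁ Λ₂ : Cdual C} (hΛ₁ : Λ₁ ∈ S) (hΛ₂ : Λ₂ ∈ S) {x y : C}
    {r s : ENNReal} (hr : r < Λ₁.1 x) (hs : s < Λ₂.1 y) :
    ∃ Λ ∈ S, r < Λ.1 x ∧ s < Λ.1 y :=
  hS _ _ (isOpen_setOf_lt_apply x r) (isOpen_setOf_lt_apply y s) ⟨Λ₁, hΛ₁, hr⟩ ⟨Λ₂, hΛ₂, hs⟩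

theorem biSup_apply_add {S : Set (Cdual C)} (hS : IsPreirreducible S) (x y : C) :
    ⨆ Λ ∈ S, Λ.1 (x + y) = (⨆ Λ ∈ S, Λ.1 x) + ⨆ Λ ∈ S, Λ.1 y := by
  simp only [fun Λ : Cdual C => Λ.2.1 x y]
  refine le_antisymm (iSup₂_le fun Λ hΛ => add_le_add (le_biSup (fun Λ : Cdual C => Λ.1 x) hΛ)
    (le_biSup (fun Λ : Cdual C => Λ.1 y) hΛ)) ?_
  refine ENNReal.add_le_of_forall_lt (iSup₂_mono fun _ _ => le_self_add)
    (iSup₂_mono fun _ _ => le_add_self) fun r hr s hs => ?_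
  obtain ⟨Λ₁, hΛ₁, hr⟩ := lt_biSup_iff.1 hr
  obtain ⟨Λ₂, hΛ₂, hs⟩ := lt_biSup_iff.1 hs
  obtain ⟨Λ, hΛ, hrΛ, hsΛ⟩ := hS.exists_lt_apply_and_lt_apply hΛ₁ hΛ₂ hr hs
  exact (add_le_add hrΛ.le hsΛ.le).trans (le_biSup (fun Λ : Cdual C => Λ.1 x + Λ.1 y) hΛ)

theorem isLinearLSC_biSup {S : Set (Cdual C)} (hS : IsPreirreducible S) :
    IsLinearLSC fun x => ⨆ Λ ∈ S, Λ.1 x := by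
  refine ⟨biSup_apply_add hS, fun a x => ?_, ?_⟩
  · simp only [fun Λ : Cdual C => Λ.2.2.1 a x, ENNReal.mul_iSup]
  · exact isLSC_iff_lowerSemicontinuous.2 <| lowerSemicontinuous_biSup fun Λ _ =>
      isLSC_iff_lowerSemicontinuous.1 Λ.2.2.2

def sSupOfIsPreirreducible {S : Set (Cdual C)} (hS : IsPreirreducible S) : Cdual C :=
  ⟨_, isLinearLSC_biSup hS⟩

theorem isGenericPoint_sSupOfIsPreirreducible {S : Set (Cdual C)} (hS : IsIrreducible S)
    (hSc : IsClosed S) : IsGenericPoint (sSupOfIsPreirreducible hS.2) S := by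
  set Λ₀ := sSupOfIsPreirreducible hS.2
  have hmem : Λ₀ ∈ S := hSc.closure_subset <| hS.mem_closure_of_eq_generateFrom rfl <| by
    rintro _ ⟨x, r, rfl⟩ hr
    obtain ⟨Λ, hΛ, hrΛ⟩ := lt_biSup_iff.1 (show r < ⨆ Λ ∈ S, Λ.1 x from hr)
    exact ⟨Λ, hrΛ, hΛ⟩
  refine isGenericPoint_iff_specializes.2 fun Λ => ⟨fun h => h.mem_closed hSc hmem, fun hΛ => ?_⟩
  exact specializes_iff_apply_le.2 fun x => le_biSup (fun Λ : Cdual C => Λ.1 x) hΛ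

instance : QuasiSober (Cdual C) :=
  ⟨fun hS hSc => ⟨_, isGenericPoint_sSupOfIsPreirreducible hS hSc⟩⟩

end Cdual

theorem dual_cone_sober_general {C : Type*} [TopologicalSpace C]
    [AddCommMonoid C] [Module NNReal C] :
    @T0Space (Cdual C) (dualTopology C) ∧ @QuasiSober (Cdual C) (dualTopology C) :=
  ⟨inferInstance, inferInstance⟩

/-- The dual cone `C*` of a topological cone, with the weak*upper topology,
is a sober topological space. -/
theorem dual_cone_sober {C : Type*} [TopologicalSpace C]
    [AddCommMonoid C] [Module NNReal C] (htop : IsTopologicalCone C) :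
    @T0Space (Cdual C) (dualTopology C) ∧ @QuasiSober (Cdual C) (dualTopology C) :=
  dual_cone_sober_general
end
end

section
/- Let L be a complete lattice equipped with the upper topology. Every nonempty closed subset C of L that is closed under binary joins (x, y ∈ C implies x ⊔ y ∈ C) contains its supremum and satisfies C = ↓(sup C). -/
open Set Topology

noncomputable section

/-- The upper topology on a preorder: the coarsest topology in which every
principal ideal `↓x` is closed. -/
def upperTop (L : Type*) [Preorder L] : TopologicalSpace L :=
  TopologicalSpace.generateFrom {s : Set L | ∃ x : L, s = (Set.Iic x)ᶜ}

lemma upperTop_isUpperSet {L : Type*} [Preorder L] {U : Set L}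
    (hU : IsOpen[upperTop L] U) : IsUpperSet U := by
  have hU' : TopologicalSpace.GenerateOpen {s : Set L | ∃ x : L, s = (Set.Iic x)ᶜ} U := hU
  induction hU' with
  | basic s hs =>
    obtain ⟨x, rfl⟩ := hs
    intro a b hab ha hb
    exact ha (hab.trans hb)
  | univ => exact fun _ _ _ _ => trivial
  | inter s t hs ht ihs iht => exact (ihs hs).inter (iht ht)
  | sUnion S hS ih => exact isUpperSet_sUnion fun s hs => ih s hs (hS s hs)

lemma upperTop_key {L : Type*} [CompleteLattice L] (C : Set L) (hne : C.Nonempty)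
    (hjoin : ∀ x ∈ C, ∀ y ∈ C, x ⊔ y ∈ C) {U : Set L}
    (hU : IsOpen[upperTop L] U) (hmem : sSup C ∈ U) : (U ∩ C).Nonempty := by
  have hU' : TopologicalSpace.GenerateOpen {s : Set L | ∃ x : L, s = (Set.Iic x)ᶜ} U := hU
  induction hU' with
  | basic s hs =>
    obtain ⟨x, rfl⟩ := hs
    by_contra h
    rw [Set.not_nonempty_iff_eq_empty, Set.eq_empty_iff_forall_notMem] at h
    exact hmem (Set.mem_Iic.mpr (sSup_le fun c hc =>
      not_not.mp fun hcx => h c ⟨hcx, hc⟩))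
  | univ => exact hne.imp fun c hc => ⟨trivial, hc⟩
  | inter s t hs ht ihs iht =>
    obtain ⟨a, haU, haC⟩ := ihs hs hmem.1
    obtain ⟨b, hbU, hbC⟩ := iht ht hmem.2
    have hsU : IsUpperSet s := upperTop_isUpperSet (hs : IsOpen[upperTop L] s)
    have htU : IsUpperSet t := upperTop_isUpperSet (ht : IsOpen[upperTop L] t)
    exact ⟨a ⊔ b, ⟨hsU le_sup_left haU, htU le_sup_right hbU⟩, hjoin a haC b hbC⟩
  | sUnion S hS ih =>
    obtain ⟨s, hsS, hmem'⟩ := hmem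
    obtain ⟨a, haU, haC⟩ := ih s hsS (hS s hsS) hmem'
    exact ⟨a, ⟨s, hsS, haU⟩, haC⟩

/-- In a complete lattice with the upper topology, every nonempty closed
set that is closed under binary joins contains its supremum and is the principal ideal
generated by it. -/
theorem closed_join_closed_eq_Iic_sSup {L : Type*} [CompleteLattice L]
    (C : Set L) (hne : C.Nonempty) (hclosed : IsClosed[upperTop L] C)
    (hjoin : ∀ x ∈ C, ∀ y ∈ C, x ⊔ y ∈ C) :
    sSup C ∈ C ∧ C = Set.Iic (sSup C) := by
  have hopen : IsOpen[upperTop L] Cᶜ := hclosed.isOpen_compl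
  have hsup : sSup C ∈ C := by
    by_contra h
    obtain ⟨a, haU, haC⟩ := upperTop_key C hne hjoin hopen h
    exact haU haC
  refine ⟨hsup, Set.Subset.antisymm (fun y hy => le_sSup hy) fun y hy => ?_⟩
  by_contra h
  exact (upperTop_isUpperSet hopen hy h) hsup
end
end

section
/- Let L be a complete lattice equipped with the upper topology, and let Λ : L → ℝ≥0∞. Then Λ is lower semicontinuous, satisfies Λ(x ⊔ y) = Λ(x) + Λ(y) for all x, y ∈ L, and Λ(⊥) = 0, if and only if there exists x₀ ∈ L such that Λ(x) = 0 for x ≤ x₀ and Λ(x) = ∞ for x ≰ x₀. -/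
open Set Topology

noncomputable section

/- For `Λ` additive on joins, `Λ x = Λ (x ⊔ x) = 2 Λ x`, so `Λ` only takes the values
`0` and `∞`. Its zero set is closed in the upper topology, hence Scott-closed (the upper topology is
coarser than the Scott topology); it contains `⊥` and is closed under `⊔`, so it is a directed set
containing its own supremum `x₀`, and being a lower set it equals `↓x₀`. -/

namespace Topology

lemma upperTop_eq_upper (L : Type*) [Preorder L] : upperTop L = upper L := by
  simp only [upperTop, upper, eq_comm]

lemma scott_le_upper (α : Type*) [Preorder α] : scott α univ ≤ upper α := by
  let := scott α univ
  have : IsScott α univ := ⟨rfl⟩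
  exact le_generateFrom fun _ ⟨a, ha⟩ ↦ ha ▸ isClosed_Iic.isOpen_compl

lemma eq_Iic_sSup_of_isClosed_upper {L : Type*} [CompleteLattice L] {s : Set L}
    (hs : IsClosed[upper L] s) (hsup : SupClosed s) (hne : s.Nonempty) :
    s = Iic (sSup s) := by
  let := scott L univ
  have : IsScott L univ := ⟨rfl⟩
  have hscott : IsClosed s := hs.mono (scott_le_upper L)
  have hmem : sSup s ∈ s :=
    IsScott.dirSupClosed_of_isClosed hscott subset_rfl hne hsup.directedOn (isLUB_sSup s)
  exact Subset.antisymm (fun _ ↦ le_sSup) ((IsScott.isLowerSet_of_isClosed hscott).Iic_subset hmem)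

end Topology

lemma ENNReal.eq_zero_or_top_of_add_self {a : ENNReal} (h : a + a = a) : a = 0 ∨ a = ⊤ := by
  by_contra! ha
  exact ha.1 ((ENNReal.add_right_inj ha.2).1 (h.trans (add_zero a).symm))

/-- On a complete lattice with the upper topology, a map `Λ : L → ℝ≥0∞` is
lower semicontinuous, additive for binary joins, and zero at `⊥` iff it is of the form
`Λ = ∞ · χ_{L ∖ ↓x₀}` for some `x₀ ∈ L`. -/
theorem lsc_join_additive_iff {L : Type*} [CompleteLattice L] (Λ : L → ENNReal) :
    ((∀ r : NNReal, IsOpen[upperTop L] {x : L | (r : ENNReal) < Λ x}) ∧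
      (∀ x y : L, Λ (x ⊔ y) = Λ x + Λ y) ∧ Λ ⊥ = 0) ↔
    ∃ x₀ : L, ∀ x : L, (x ≤ x₀ → Λ x = 0) ∧ (¬ x ≤ x₀ → Λ x = ⊤) := by
  rw [Topology.upperTop_eq_upper]
  constructor
  · rintro ⟨hlsc, hadd, hbot⟩
    set Z : Set L := {x | Λ x = 0}
    let := Topology.upper L
    have hZ_closed : IsClosed Z := by
      rw [← isOpen_compl_iff]
      convert hlsc 0 using 1
      ext x
      simp [Z, pos_iff_ne_zero]
    have hZ_sup : SupClosed Z := fun a ha b hb ↦ by simp_all [Z]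
    have hZ := Topology.eq_Iic_sSup_of_isClosed_upper hZ_closed hZ_sup ⟨⊥, hbot⟩
    refine ⟨sSup Z, fun x ↦ ⟨fun hx ↦ hZ.superset hx, fun hx ↦ ?_⟩⟩
    have hx0 : Λ x ≠ 0 := fun h ↦ hx (le_sSup h)
    exact (ENNReal.eq_zero_or_top_of_add_self (by rw [← hadd, sup_idem])).resolve_left hx0
  · rintro ⟨x₀, hx₀⟩
    classical
    have hΛ : ∀ x, Λ x = if x ≤ x₀ then 0 else ⊤ := fun x ↦ by
      split_ifs with h
      exacts [(hx₀ x).1 h, (hx₀ x).2 h]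
    refine ⟨fun r ↦ ?_, fun x y ↦ ?_, by simp [hΛ]⟩
    · have hset : {x : L | (r : ENNReal) < Λ x} = (Iic x₀)ᶜ := by
        ext x
        by_cases h : x ≤ x₀ <;> simp [hΛ, h]
      exact hset ▸ TopologicalSpace.isOpen_generateFrom_of_mem ⟨x₀, rfl⟩
    · simp only [hΛ, sup_le_iff]
      split_ifs <;> simp_all
end
end

section
/- Let L be a complete lattice equipped with the upper topology, and let ν be a continuous valuation on L. Set x₀ := sup (supp ν), the supremum of the support of ν. Then x₀ is the unique point of L such that Λ(x₀) = ∫ Λ dν for every lower semicontinuous Λ : L → ℝ≥0∞ satisfying Λ(x ⊔ y) = Λ(x) + Λ(y) for all x, y ∈ L and Λ(⊥) = 0. -/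
open Set Topology

noncomputable section

/-!
Join-additivity gives `Λ x = Λ (x ⊔ x) = 2 Λ x`, so an admissible `Λ` only takes the values `0`
and `∞`. Its kernel is closed, contains `⊥` and is closed under `⊔`; closed sets of the upper
topology are closed under directed suprema, so the kernel is a principal ideal `↓y` and
`Λ = ∞ · 𝟙_{(↓y)ᶜ}`. For such `Λ` both sides of the barycenter equation lie in `{0, ∞}`, and
`ν (↓y)ᶜ = 0` iff `(↓y)ᶜ` misses the support, i.e. iff `sSup (supp ν) ≤ y`. Hence `x₀` is a
barycenter iff `x₀ ≤ y ↔ sSup (supp ν) ≤ y` for every `y`, i.e. iff `x₀ = sSup (supp ν)`.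
-/

open scoped ENNReal

theorem isUpper_upperTop (L : Type*) [Preorder L] : @Topology.IsUpper L (upperTop L) _ :=
  @Topology.IsUpper.mk L (upperTop L) _ (by simp only [upperTop, Topology.upper, eq_comm])

namespace Topology.IsUpper

variable {α : Type*} [CompleteLattice α] [TopologicalSpace α] [IsUpper α] {s : Set α}

theorem dirSupInacc_of_isOpen (hs : IsOpen s) : DirSupInacc s := by
  rw [isOpen_iff_generate_Iic_compl] at hs
  induction hs with
  | basic _ h => obtain ⟨a, rfl⟩ := h; exact (dirSupClosed_Iic a).compl
  | univ => exact fun _ hd _ _ _ ↦ by simpa using hd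
  | inter _ _ _ _ hs ht => exact hs.inter ht
  | sUnion _ _ h => exact DirSupInacc.sUnion h

theorem dirSupClosed_of_isClosed (hs : IsClosed s) : DirSupClosed s :=
  dirSupInacc_compl.1 (dirSupInacc_of_isOpen hs.isOpen_compl)

theorem eq_Iic_sSup_of_isClosed (hs : IsClosed s) (hne : s.Nonempty)
    (hd : DirectedOn (· ≤ ·) s) : s = Iic (sSup s) := by
  have hsup : sSup s ∈ s :=
    dirSupClosed_iff_forall_sSup.1 (dirSupClosed_of_isClosed hs) le_rfl hne hd
  exact Subset.antisymm (fun _ ↦ le_sSup) fun _ hx ↦ isLowerSet_of_isClosed hs hx hsup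

end Topology.IsUpper

theorem ENNReal.eq_zero_or_eq_top_of_map_sup {α : Type*} [SemilatticeSup α] {Λ : α → ℝ≥0∞}
    (hΛ : ∀ x y, Λ (x ⊔ y) = Λ x + Λ y) (x : α) : Λ x = 0 ∨ Λ x = ∞ := by
  have h := hΛ x x
  rw [sup_idem] at h
  exact or_iff_not_imp_right.2 fun hx ↦ ((ENNReal.add_right_inj hx).1 (by rwa [add_zero])).symm

theorem Set.indicator_compl_Iic_sup {α : Type*} [SemilatticeSup α] (y a b : α) :
    (Iic y)ᶜ.indicator (fun _ ↦ ∞) (a ⊔ b) =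
      (Iic y)ᶜ.indicator (fun _ ↦ ∞) a + (Iic y)ᶜ.indicator (fun _ ↦ ∞) b := by
  by_cases ha : a ≤ y <;> by_cases hb : b ≤ y <;> simp [indicator, ha, hb]

theorem Set.setOf_lt_indicator_top {X : Type*} (U : Set X) {r : ℝ≥0∞} (hr : r ≠ ∞) :
    {x | r < U.indicator (fun _ ↦ ∞) x} = U := by
  ext x
  by_cases hx : x ∈ U <;> simp [hx, hr.lt_top]

theorem exists_eq_indicator_compl_Iic {L : Type*} [CompleteLattice L] [TopologicalSpace L]
    [Topology.IsUpper L] {Λ : L → ℝ≥0∞} (hΛ : IsOpen {x | 0 < Λ x})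
    (hadd : ∀ x y, Λ (x ⊔ y) = Λ x + Λ y) (hbot : Λ ⊥ = 0) :
    ∃ y, Λ = (Iic y)ᶜ.indicator (fun _ ↦ ∞) := by
  have hker : {x | Λ x = 0} = Iic (sSup {x | Λ x = 0}) := by
    refine Topology.IsUpper.eq_Iic_sSup_of_isClosed ?_ ⟨⊥, hbot⟩ fun a ha b hb ↦
      ⟨a ⊔ b, by simp_all, le_sup_left, le_sup_right⟩
    rw [← isOpen_compl_iff]
    simpa only [compl_ofPred, pos_iff_ne_zero] using hΛ
  refine ⟨sSup {x | Λ x = 0}, funext fun x ↦ ?_⟩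
  rw [← hker]
  rcases ENNReal.eq_zero_or_eq_top_of_map_sup hadd x with hx | hx <;> simp [hx]

namespace ContinuousValuation

section

variable {X : Type*} [TopologicalSpace X] (ν : ContinuousValuation X)

def support : Set X := (⋃₀ {V : Set X | IsOpen V ∧ ν.toFun V = 0})ᶜ

theorem toFun_union_eq_zero {U V : Set X} (hU : IsOpen U) (hV : IsOpen V)
    (hU0 : ν.toFun U = 0) (hV0 : ν.toFun V = 0) : ν.toFun (U ∪ V) = 0 := by
  have h := ν.modular' U V hU hV
  rw [hU0, hV0, add_zero] at h
  exact (add_eq_zero.1 h).1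

theorem isOpen_compl_support : IsOpen ν.supportᶜ := by
  rw [support, compl_compl]
  exact isOpen_sUnion fun _ hV ↦ hV.1

theorem toFun_compl_support : ν.toFun ν.supportᶜ = 0 := by
  rw [support, compl_compl, ν.scott' _ (fun _ hV ↦ hV.1)]
  · exact iSup₂_eq_bot.2 fun _ hV ↦ hV.2
  · rintro U ⟨hU, hU0⟩ V ⟨hV, hV0⟩
    exact ⟨U ∪ V, ⟨hU.union hV, ν.toFun_union_eq_zero hU hV hU0 hV0⟩,
      subset_union_left, subset_union_right⟩

theorem toFun_eq_zero_iff_subset_compl_support {U : Set X} (hU : IsOpen U) :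
    ν.toFun U = 0 ↔ U ⊆ ν.supportᶜ := by
  refine ⟨fun h ↦ ?_, fun h ↦ ?_⟩
  · rw [support, compl_compl]
    exact subset_sUnion_of_mem ⟨hU, h⟩
  · exact le_antisymm (ν.toFun_compl_support ▸ ν.mono' _ _ hU ν.isOpen_compl_support h) bot_le

theorem valIntegral_indicator_top (U : Set X) :
    valIntegral ν (U.indicator fun _ ↦ ∞) = ν.toFun U * ∞ := by
  simp only [valIntegral, setOf_lt_indicator_top U ENNReal.ofReal_ne_top,
    MeasureTheory.setLIntegral_const, Real.volume_Ioi]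

end

section

variable {L : Type*} [CompleteLattice L] [TopologicalSpace L] [ClosedIicTopology L]
  (ν : ContinuousValuation L)

theorem toFun_compl_Iic_eq_zero_iff (y : L) :
    ν.toFun (Iic y)ᶜ = 0 ↔ sSup ν.support ≤ y := by
  rw [ν.toFun_eq_zero_iff_subset_compl_support isClosed_Iic.isOpen_compl, compl_subset_compl,
    sSup_le_iff]
  rfl

theorem indicator_compl_Iic_eq_valIntegral_iff (x₀ y : L) :
    (Iic y)ᶜ.indicator (fun _ ↦ ∞) x₀ = valIntegral ν ((Iic y)ᶜ.indicator fun _ ↦ ∞) ↔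
      (x₀ ≤ y ↔ sSup ν.support ≤ y) := by
  rw [valIntegral_indicator_top, ← toFun_compl_Iic_eq_zero_iff]
  by_cases hx : x₀ ≤ y <;> by_cases hν : ν.toFun (Iic y)ᶜ = 0 <;> simp [hx, hν, ENNReal.mul_top]

end

end ContinuousValuation

/-- For a continuous valuation `ν` on a complete lattice `L` with its upper
topology, `sSup (supp ν)` is the unique point `x₀` such that `Λ(x₀) = ∫ Λ dν` for every lower
semicontinuous `Λ : L → ℝ≥0∞` that is additive for binary joins and zero at `⊥`. -/
theorem barycenter_eq_sSup_supp {L : Type*} [CompleteLattice L]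
    (ν : @ContinuousValuation L (upperTop L)) :
    ∀ x₀ : L,
      (∀ Λ : L → ENNReal,
        (∀ r : NNReal, IsOpen[upperTop L] {x : L | (r : ENNReal) < Λ x}) →
        (∀ x y : L, Λ (x ⊔ y) = Λ x + Λ y) → Λ ⊥ = 0 →
        Λ x₀ = @valIntegral L (upperTop L) ν Λ) ↔
      x₀ = sSup ((⋃₀ {V : Set L | IsOpen[upperTop L] V ∧ @ContinuousValuation.toFun L (upperTop L) ν V = 0})ᶜ) := by
  let _ := upperTop L
  have := isUpper_upperTop L
  intro x₀
  change _ ↔ x₀ = sSup ν.support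
  constructor
  · intro h
    refine eq_of_forall_ge_iff fun y ↦ (ν.indicator_compl_Iic_eq_valIntegral_iff x₀ y).1 <|
      h _ (fun r ↦ ?_) (indicator_compl_Iic_sup y) (by simp)
    rw [setOf_lt_indicator_top _ ENNReal.coe_ne_top]
    exact isClosed_Iic.isOpen_compl
  · rintro rfl Λ hΛ hadd hbot
    obtain ⟨y, rfl⟩ := exists_eq_indicator_compl_Iic (by simpa using hΛ 0) hadd hbot
    exact (ν.indicator_compl_Iic_eq_valIntegral_iff _ y).2 Iff.rfl
end
end

section
/- Let L be the poset consisting of a least element ⊥, a greatest element ⊤, and two disjoint copies {aₙ : n ∈ ℕ} and {bₙ : n ∈ ℕ} of ℕ, where aₘ ≤ aₙ iff m ≤ n, bₘ ≤ bₙ iff m ≤ n, and every aₘ is incomparable with every bₙ. Then: (i) the nonempty proper Scott-open subsets of L are exactly the sets ↑aₘ ∪ ↑bₙ for m, n ∈ ℕ; (ii) every such set is compact, so L is locally compact in its Scott topology; (iii) the way-below relation on L satisfies x ≪ y iff x = ⊥; consequently L is not a continuous dcpo. -/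
open Set Topology

noncomputable section

/-- The poset consisting of a least element `⊥`, a greatest element `⊤`, and two disjoint
incomparable copies of `ℕ` side by side. -/
abbrev Ldcpo : Type := WithBot (WithTop (ℕ ⊕ ℕ))

/-- The `m`-th element of the first copy of `ℕ`. -/
def aL (m : ℕ) : Ldcpo := ((Sum.inl m : ℕ ⊕ ℕ) : WithTop (ℕ ⊕ ℕ))

/-- The `n`-th element of the second copy of `ℕ`. -/
def bL (n : ℕ) : Ldcpo := ((Sum.inr n : ℕ ⊕ ℕ) : WithTop (ℕ ⊕ ℕ))

/-- The Scott topology on `Ldcpo`. -/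
def scottT : TopologicalSpace Ldcpo := Topology.scott Ldcpo Set.univ

/-- The way-below relation: `x ≪ y` iff every directed set with a supremum above `y`
contains an element above `x`. -/
def wayBelow {α : Type*} [Preorder α] (x y : α) : Prop :=
  ∀ D : Set α, D.Nonempty → DirectedOn (· ≤ ·) D → ∀ d : α, IsLUB D d → y ≤ d →
    ∃ z ∈ D, x ≤ z

/-! ### Auxiliary order lemmas -/

lemma aL_le_aL {m k : ℕ} : aL m ≤ aL k ↔ m ≤ k := by simp [aL]
lemma bL_le_bL {m k : ℕ} : bL m ≤ bL k ↔ m ≤ k := by simp [bL]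
lemma not_aL_le_bL (m k : ℕ) : ¬ aL m ≤ bL k := by simp [aL, bL]
lemma not_bL_le_aL (m k : ℕ) : ¬ bL m ≤ aL k := by simp [aL, bL]
lemma not_aL_le_bot (m : ℕ) : ¬ aL m ≤ ⊥ := by simp [aL]
lemma not_bL_le_bot (m : ℕ) : ¬ bL m ≤ ⊥ := by simp [bL]
lemma not_top_le_aL (m : ℕ) : ¬ (⊤ : Ldcpo) ≤ aL m := by simp [aL]
lemma not_top_le_bL (m : ℕ) : ¬ (⊤ : Ldcpo) ≤ bL m := by simp [bL]
lemma not_top_le_bot : ¬ (⊤ : Ldcpo) ≤ ⊥ := by simp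
lemma aL_ne_bot (m : ℕ) : aL m ≠ ⊥ := by simp [aL]
lemma bL_ne_bot (m : ℕ) : bL m ≠ ⊥ := by simp [bL]

lemma Ldcpo_cases (x : Ldcpo) : x = ⊥ ∨ x = ⊤ ∨ (∃ m, x = aL m) ∨ (∃ n, x = bL n) := by
  rcases x with _ | (_ | (m | n))
  · exact Or.inl rfl
  · exact Or.inr (Or.inl rfl)
  · exact Or.inr (Or.inr (Or.inl ⟨m, rfl⟩))
  · exact Or.inr (Or.inr (Or.inr ⟨n, rfl⟩))

lemma directedOn_range_aL : DirectedOn (· ≤ ·) (Set.range aL) := by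
  rintro _ ⟨i, rfl⟩ _ ⟨j, rfl⟩
  exact ⟨aL (max i j), ⟨max i j, rfl⟩, aL_le_aL.2 (le_max_left _ _),
    aL_le_aL.2 (le_max_right _ _)⟩

lemma directedOn_range_bL : DirectedOn (· ≤ ·) (Set.range bL) := by
  rintro _ ⟨i, rfl⟩ _ ⟨j, rfl⟩
  exact ⟨bL (max i j), ⟨max i j, rfl⟩, bL_le_bL.2 (le_max_left _ _),
    bL_le_bL.2 (le_max_right _ _)⟩

lemma isLUB_range_aL : IsLUB (Set.range aL) ⊤ := by
  constructor
  · rintro _ ⟨i, rfl⟩; exact le_top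
  · intro u hu
    rcases Ldcpo_cases u with rfl | rfl | ⟨k, rfl⟩ | ⟨k, rfl⟩
    · exact absurd (hu ⟨0, rfl⟩) (not_aL_le_bot 0)
    · exact le_rfl
    · exact absurd (hu ⟨k + 1, rfl⟩) (by simp [aL_le_aL])
    · exact absurd (hu ⟨0, rfl⟩) (not_aL_le_bL 0 k)

lemma isLUB_range_bL : IsLUB (Set.range bL) ⊤ := by
  constructor
  · rintro _ ⟨i, rfl⟩; exact le_top
  · intro u hu
    rcases Ldcpo_cases u with rfl | rfl | ⟨k, rfl⟩ | ⟨k, rfl⟩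
    · exact absurd (hu ⟨0, rfl⟩) (not_bL_le_bot 0)
    · exact le_rfl
    · exact absurd (hu ⟨0, rfl⟩) (not_bL_le_aL 0 k)
    · exact absurd (hu ⟨k + 1, rfl⟩) (by simp [bL_le_bL])

/-- Characterisation of Scott-open sets via upper sets and directed-sup inaccessibility. -/
lemma scottT_isOpen_iff {U : Set Ldcpo} :
    IsOpen[scottT] U ↔ IsUpperSet U ∧ DirSupInacc U := by
  letI := scottT
  haveI : Topology.IsScott Ldcpo univ := ⟨rfl⟩
  rw [Topology.IsScott.isOpen_iff_isUpperSet_and_dirSupInaccOn (D := univ), dirSupInaccOn_univ]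

/-- Helper: if everything in `D` is either `⊥` or `c k` with `k < m` where `c` is an order
embedding of a chain, then the LUB of `D` is not above `c m`. -/
lemma chain_lub_aux (c : ℕ → Ldcpo) (hc : ∀ i j : ℕ, c i ≤ c j ↔ i ≤ j)
    (hcbot : ∀ i, ¬ c i ≤ ⊥) (m : ℕ) (D : Set Ldcpo) (hne : D.Nonempty) (d : Ldcpo)
    (hlub : IsLUB D d) (hD : ∀ z ∈ D, z = ⊥ ∨ ∃ k, k < m ∧ z = c k) : ¬ c m ≤ d := by
  intro hmd
  cases m with
  | zero =>
    have hbd : d ≤ ⊥ := by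
      apply hlub.2
      intro z hz
      rcases hD z hz with rfl | ⟨k, hk, rfl⟩
      · exact le_rfl
      · omega
    exact hcbot 0 (hmd.trans hbd)
  | succ m' =>
    have hbd : d ≤ c m' := by
      apply hlub.2
      intro z hz
      rcases hD z hz with rfl | ⟨k, hk, rfl⟩
      · exact bot_le
      · exact (hc k m').2 (by omega)
    have := (hc (m' + 1) m').1 (hmd.trans hbd)
    omega

/-- `Ici (aL m) ∪ Ici (bL n)` is Scott open. -/
lemma isOpen_union_Ici (m n : ℕ) :
    IsOpen[scottT] (Set.Ici (aL m) ∪ Set.Ici (bL n)) := by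
  rw [scottT_isOpen_iff]
  constructor
  · exact (isUpperSet_Ici _).union (isUpperSet_Ici _)
  · intro D hne hdir d hlub hd
    by_contra hempty
    rw [not_nonempty_iff_eq_empty] at hempty
    have hnotin : ∀ z ∈ D, ¬ aL m ≤ z ∧ ¬ bL n ≤ z := by
      intro z hz
      constructor <;> intro hle
      · have hmem : z ∈ D ∩ (Set.Ici (aL m) ∪ Set.Ici (bL n)) :=
          ⟨hz, Set.mem_union_left _ (Set.mem_Ici.2 hle)⟩
        rw [hempty] at hmem
        exact hmem
      · have hmem : z ∈ D ∩ (Set.Ici (aL m) ∪ Set.Ici (bL n)) :=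
          ⟨hz, Set.mem_union_right _ (Set.mem_Ici.2 hle)⟩
        rw [hempty] at hmem
        exact hmem
    -- every element of D is ⊥, a small aL, or a small bL
    have hclass : ∀ z ∈ D, z = ⊥ ∨ (∃ k, k < m ∧ z = aL k) ∨ (∃ k, k < n ∧ z = bL k) := by
      intro z hz
      rcases Ldcpo_cases z with rfl | rfl | ⟨k, rfl⟩ | ⟨k, rfl⟩
      · exact Or.inl rfl
      · exact absurd le_top (hnotin _ hz).1
      · refine Or.inr (Or.inl ⟨k, ?_, rfl⟩)
        by_contra h
        exact (hnotin _ hz).1 (aL_le_aL.2 (by omega))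
      · refine Or.inr (Or.inr ⟨k, ?_, rfl⟩)
        by_contra h
        exact (hnotin _ hz).2 (bL_le_bL.2 (by omega))
    -- D cannot contain both an aL and a bL
    have hsplit : (∀ z ∈ D, z = ⊥ ∨ ∃ k, k < m ∧ z = aL k) ∨
        (∀ z ∈ D, z = ⊥ ∨ ∃ k, k < n ∧ z = bL k) := by
      by_cases hBD : ∃ j, bL j ∈ D
      · right
        obtain ⟨j, hj⟩ := hBD
        intro z hz
        rcases hclass z hz with h | ⟨k, hk, rfl⟩ | h
        · exact Or.inl h
        · exfalso
          obtain ⟨w, hw, hw₁, hw₂⟩ := hdir _ hz _ hj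
          rcases hclass w hw with rfl | ⟨i, _, rfl⟩ | ⟨i, _, rfl⟩
          · exact not_aL_le_bot k hw₁
          · exact not_bL_le_aL j i hw₂
          · exact not_aL_le_bL k i hw₁
        · exact Or.inr h
      · left
        intro z hz
        rcases hclass z hz with h | h | ⟨k, hk, rfl⟩
        · exact Or.inl h
        · exact Or.inr h
        · exact absurd ⟨k, hz⟩ hBD
    rcases hsplit with hA | hB
    · -- all of D below the a-chain
      have hdA : ¬ aL m ≤ d := chain_lub_aux aL (fun _ _ => aL_le_aL) not_aL_le_bot m D hne d hlub hA
      rcases hd with hd | hd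
      · exact hdA hd
      · -- bL n ≤ d but d ≤ aL m or d ≤ ⊥
        have hbd : d ≤ aL m := by
          apply hlub.2
          intro z hz
          rcases hA z hz with rfl | ⟨k, hk, rfl⟩
          · exact bot_le
          · exact aL_le_aL.2 (by omega)
        exact not_bL_le_aL n m (hd.trans hbd)
    · have hdB : ¬ bL n ≤ d := chain_lub_aux bL (fun _ _ => bL_le_bL) not_bL_le_bot n D hne d hlub hB
      rcases hd with hd | hd
      · have hbd : d ≤ bL n := by
          apply hlub.2
          intro z hz
          rcases hB z hz with rfl | ⟨k, hk, rfl⟩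
          · exact bot_le
          · exact bL_le_bL.2 (by omega)
        exact not_aL_le_bL m n (hd.trans hbd)
      · exact hdB hd

/-- A set containing two points such that everything in it is above one of them is compact. -/
lemma compact_of_pair (s : Set Ldcpo) (x y : Ldcpo) (hx : x ∈ s) (hy : y ∈ s)
    (hs : ∀ z ∈ s, x ≤ z ∨ y ≤ z) : @IsCompact Ldcpo scottT s := by
  classical
  letI := scottT
  apply isCompact_of_finite_subcover
  intro ι U hU hcov
  obtain ⟨ix, hix⟩ := Set.mem_iUnion.1 (hcov hx)
  obtain ⟨iy, hiy⟩ := Set.mem_iUnion.1 (hcov hy)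
  refine ⟨{ix, iy}, fun z hz => ?_⟩
  have hUup : ∀ i, IsUpperSet (U i) := fun i => (scottT_isOpen_iff.1 (hU i)).1
  simp only [Finset.mem_insert, Finset.mem_singleton, Set.mem_iUnion]
  rcases hs z hz with h | h
  · exact ⟨ix, Or.inl rfl, hUup ix h hix⟩
  · exact ⟨iy, Or.inr rfl, hUup iy h hiy⟩

lemma compact_union_Ici (m n : ℕ) :
    @IsCompact Ldcpo scottT (Set.Ici (aL m) ∪ Set.Ici (bL n)) :=
  compact_of_pair _ (aL m) (bL n) (Set.mem_union_left _ Set.self_mem_Ici)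
    (Set.mem_union_right _ Set.self_mem_Ici) (fun _ hz => hz)

lemma compact_univ_L : @IsCompact Ldcpo scottT (Set.univ : Set Ldcpo) :=
  compact_of_pair _ ⊥ ⊥ trivial trivial (fun _ _ => Or.inl bot_le)

/-- Classification of nonempty proper Scott-open sets. -/
lemma open_iff_union_Ici (U : Set Ldcpo) :
    (IsOpen[scottT] U ∧ U.Nonempty ∧ U ≠ Set.univ) ↔
      ∃ m n : ℕ, U = Set.Ici (aL m) ∪ Set.Ici (bL n) := by
  classical
  constructor
  · rintro ⟨hopen, hne, hproper⟩
    obtain ⟨hup, hinacc⟩ := scottT_isOpen_iff.1 hopen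
    have hbot : ⊥ ∉ U := by
      intro h
      exact hproper (Set.eq_univ_of_forall fun z => hup bot_le h)
    have htop : (⊤ : Ldcpo) ∈ U := by
      obtain ⟨u, hu⟩ := hne
      exact hup le_top hu
    obtain ⟨_, ⟨⟨ka, rfl⟩, hka⟩⟩ :=
      hinacc (Set.range_nonempty aL) directedOn_range_aL isLUB_range_aL htop
    obtain ⟨_, ⟨⟨kb, rfl⟩, hkb⟩⟩ :=
      hinacc (Set.range_nonempty bL) directedOn_range_bL isLUB_range_bL htop
    have hA : ∃ k, aL k ∈ U := ⟨ka, hka⟩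
    have hB : ∃ k, bL k ∈ U := ⟨kb, hkb⟩
    refine ⟨Nat.find hA, Nat.find hB, ?_⟩
    apply Set.Subset.antisymm
    · intro z hz
      rcases Ldcpo_cases z with rfl | rfl | ⟨k, rfl⟩ | ⟨k, rfl⟩
      · exact absurd hz hbot
      · exact Set.mem_union_left _ (Set.mem_Ici.2 le_top)
      · refine Or.inl (aL_le_aL.2 ?_)
        exact Nat.find_le hz
      · refine Or.inr (bL_le_bL.2 ?_)
        exact Nat.find_le hz
    · rintro z (hz | hz)
      · exact hup hz (Nat.find_spec hA)
      · exact hup hz (Nat.find_spec hB)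
  · rintro ⟨m, n, rfl⟩
    refine ⟨isOpen_union_Ici m n, ⟨aL m, Set.mem_union_left _ Set.self_mem_Ici⟩, ?_⟩
    intro h
    have : (⊥ : Ldcpo) ∈ Set.Ici (aL m) ∪ Set.Ici (bL n) := h ▸ trivial
    rcases this with h' | h'
    · exact not_aL_le_bot m h'
    · exact not_bL_le_bot n h'

lemma wayBelow_iff_bot (x y : Ldcpo) : wayBelow x y ↔ x = ⊥ := by
  constructor
  · intro h
    by_contra hx
    rcases Ldcpo_cases x with rfl | rfl | ⟨m, rfl⟩ | ⟨n, rfl⟩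
    · exact hx rfl
    · obtain ⟨_, ⟨k, rfl⟩, hk⟩ :=
        h (Set.range bL) ⟨bL 0, 0, rfl⟩ directedOn_range_bL ⊤ isLUB_range_bL le_top
      exact not_top_le_bL k hk
    · obtain ⟨_, ⟨k, rfl⟩, hk⟩ :=
        h (Set.range bL) ⟨bL 0, 0, rfl⟩ directedOn_range_bL ⊤ isLUB_range_bL le_top
      exact not_aL_le_bL m k hk
    · obtain ⟨_, ⟨k, rfl⟩, hk⟩ :=
        h (Set.range aL) ⟨aL 0, 0, rfl⟩ directedOn_range_aL ⊤ isLUB_range_aL le_top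
      exact not_bL_le_aL n k hk
  · rintro rfl
    intro D hne _ d _ _
    obtain ⟨z, hz⟩ := hne
    exact ⟨z, hz, bot_le⟩

/-- (i) The nonempty proper Scott-open subsets of `L` are exactly the sets
`↑aₘ ∪ ↑bₙ`; (ii) every such set is compact, and `L` is locally compact in its Scott topology;
(iii) `x ≪ y` iff `x = ⊥`, and consequently `L` is not a continuous dcpo. -/
theorem two_ladders_not_continuous :
    (∀ U : Set Ldcpo, (IsOpen[scottT] U ∧ U.Nonempty ∧ U ≠ Set.univ) ↔
      ∃ m n : ℕ, U = Set.Ici (aL m) ∪ Set.Ici (bL n)) ∧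
    (∀ m n : ℕ, @IsCompact Ldcpo scottT (Set.Ici (aL m) ∪ Set.Ici (bL n))) ∧
    @LocallyCompactSpace Ldcpo scottT ∧
    (∀ x y : Ldcpo, wayBelow x y ↔ x = ⊥) ∧
    ¬ (∀ y : Ldcpo, DirectedOn (· ≤ ·) {x : Ldcpo | wayBelow x y} ∧
        IsLUB {x : Ldcpo | wayBelow x y} y) := by
  refine ⟨open_iff_union_Ici, compact_union_Ici, ?_, wayBelow_iff_bot, ?_⟩
  · letI := scottT
    constructor
    intro x N hN
    obtain ⟨V, hVN, hVopen, hxV⟩ := mem_nhds_iff.1 hN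
    by_cases hV : V = Set.univ
    · subst hV
      exact ⟨Set.univ, Filter.univ_mem, hVN, compact_univ_L⟩
    · obtain ⟨m, n, rfl⟩ := (open_iff_union_Ici V).1 ⟨hVopen, ⟨x, hxV⟩, hV⟩
      exact ⟨_, hVopen.mem_nhds hxV, hVN, compact_union_Ici m n⟩
  · intro h
    have h2 := (h ⊤).2
    have : {x : Ldcpo | wayBelow x ⊤} = {⊥} := by
      ext x
      simp [wayBelow_iff_bot]
    rw [this] at h2
    have : (⊤ : Ldcpo) ≤ ⊥ := h2.2 (by simp [upperBounds])
    exact not_top_le_bot this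
end
end
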